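/- Let s > 0, α > 0, β > 0, and let ξ ≥ 0 be a random scalar with ξ^{2s} ~ Gamma(α, β) (the radius of a Kotz-type distribution). Then E(ξ⁴)/(E ξ²)² = Γ(α + 2/s) Γ(α) / Γ(α + 1/s)², and as α → ∞ this equals 1 + 1/(s² α) + o(α^{−1}); in particular the condition E ξ⁴/(E ξ²)² = 1 + τ/p + o(p^{−1}) holds with τ = 2/s when α = (k − 1 + p/2)/s. -/

import Mathlib

open MeasureTheory ProbabilityTheory Filter
open scoped ENNReal NNReal Topology

noncomputable section

open Finset Nat

lemma gamma_rpow_integral {α β : ℝ} (hα : 0 < α) (hβ : 0 < β) {r : ℝ} (hr : 0 < α + r) :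
    ∫ x, x ^ r ∂(gammaMeasure α β) = Real.Gamma (α + r) / (β ^ r * Real.Gamma α) := by
  have hmeas : Measurable fun x : ℝ => (gammaPDFReal α β x).toNNReal :=
    (measurable_gammaPDFReal α β).real_toNNReal
  have hpdf : gammaPDF α β = fun x => ((gammaPDFReal α β x).toNNReal : ℝ≥0∞) := rfl
  rw [gammaMeasure, hpdf, integral_withDensity_eq_integral_smul hmeas]
  have h1 : (fun x : ℝ => (gammaPDFReal α β x).toNNReal • x ^ r)
      =ᵐ[volume] (Set.Ioi (0:ℝ)).indicator
        (fun x => β ^ α / Real.Gamma α * (x ^ (α + r - 1) * Real.exp (-(β * x)))) := by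
    have h0 : ∀ᵐ x : ℝ ∂volume, x ≠ 0 :=
      ae_iff.2 (by simp [Set.setOf_eq_eq_singleton'])
    filter_upwards [h0] with x hx
    rcases lt_or_gt_of_ne hx with hneg | hpos
    · rw [Set.indicator_of_notMem (by simpa using hneg.le)]
      simp [NNReal.smul_def, gammaPDFReal, not_le.2 hneg]
    · rw [Set.indicator_of_mem (Set.mem_Ioi.2 hpos)]
      rw [NNReal.smul_def, Real.coe_toNNReal _ (gammaPDFReal_nonneg hα hβ x)]
      rw [gammaPDFReal, if_pos hpos.le]
      rw [show α + r - 1 = (α - 1) + r by ring, Real.rpow_add hpos, smul_eq_mul]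
      ring
  rw [integral_congr_ae h1, integral_indicator measurableSet_Ioi,
    MeasureTheory.integral_const_mul, Real.integral_rpow_mul_exp_neg_mul_Ioi hr hβ]
  rw [one_div, ← Real.rpow_neg_one β, ← Real.rpow_mul hβ.le]
  have hb : β ^ (-1*(α+r)) = (β ^ α)⁻¹ * (β ^ r)⁻¹ := by
    rw [← Real.rpow_neg hβ.le, ← Real.rpow_neg hβ.le, ← Real.rpow_add hβ]
    congr 1; ring
  have hG : Real.Gamma α ≠ 0 := (Real.Gamma_pos_of_pos hα).ne'
  have ha0 : β ^ α ≠ 0 := (Real.rpow_pos_of_pos hβ α).ne'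
  have hr0 : β ^ r ≠ 0 := (Real.rpow_pos_of_pos hβ r).ne'
  rw [hb]
  field_simp


lemma prod_one_add_ge {y : ℕ → ℝ} (hy : ∀ i, 0 ≤ y i) (n : ℕ) :
    1 + ∑ i ∈ range n, y i ≤ ∏ i ∈ range n, (1 + y i) := by
  induction n with
  | zero => simp
  | succ m ih =>
    rw [prod_range_succ, sum_range_succ]
    have hs : 0 ≤ ∑ i ∈ range m, y i := sum_nonneg fun i _ => hy i
    nlinarith [hy m]

lemma prod_one_add_le {y : ℕ → ℝ} (hy : ∀ i, 0 ≤ y i) (n : ℕ) :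
    ∏ i ∈ range n, (1 + y i) ≤ Real.exp (∑ i ∈ range n, y i) := by
  rw [Real.exp_sum]
  exact Finset.prod_le_prod (fun i _ => by linarith [hy i]) (fun i _ => by linarith [Real.add_one_le_exp (y i)])

lemma sum_inv_telescope {t : ℝ} (ht : 0 < t) (n : ℕ) :
    ∑ j ∈ range n, 1 / ((t + j) * (t + j + 1)) = 1 / t - 1 / (t + n) := by
  have := Finset.sum_range_sub' (fun j : ℕ => 1 / (t + j)) n
  simp only [Nat.cast_zero, add_zero] at this
  rw [← this]
  refine sum_congr rfl fun j _ => ?_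
  have h1 : (0:ℝ) < t + j := by positivity
  have h2 : (0:ℝ) < t + j + 1 := by positivity
  push_cast
  rw [← add_assoc, div_sub_div _ _ h1.ne' h2.ne']
  rw [div_eq_div_iff (by positivity) (by positivity)]
  ring

-- GammaSeq ratio identity
lemma gammaSeq_ratio (a c : ℝ) (ha : 0 < a) (hc : 0 < c) {n : ℕ} (hn : 1 ≤ n) :
    Real.GammaSeq (a + 2*c) n * Real.GammaSeq a n / (Real.GammaSeq (a + c) n) ^ 2
      = ∏ j ∈ range (n + 1), ((a + c + j) ^ 2 / ((a + j) * (a + 2*c + j))) := by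
  have hn0 : (0:ℝ) < (n:ℝ) := by exact_mod_cast hn
  have hA : (0:ℝ) < ∏ j ∈ range (n+1), (a + (j:ℝ)) := prod_pos fun j _ => by positivity
  have hB : (0:ℝ) < ∏ j ∈ range (n+1), (a + c + (j:ℝ)) := prod_pos fun j _ => by positivity
  have hC : (0:ℝ) < ∏ j ∈ range (n+1), (a + 2*c + (j:ℝ)) := prod_pos fun j _ => by positivity
  have hf : (0:ℝ) < (n ! : ℝ) := by exact_mod_cast n.factorial_pos
  have hr1 : (0:ℝ) < (n:ℝ) ^ a := Real.rpow_pos_of_pos hn0 _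
  have hr2 : (0:ℝ) < (n:ℝ) ^ (a + c) := Real.rpow_pos_of_pos hn0 _
  have hr3 : (0:ℝ) < (n:ℝ) ^ (a + 2*c) := Real.rpow_pos_of_pos hn0 _
  have key : (n:ℝ) ^ (a + 2*c) * (n:ℝ) ^ a = ((n:ℝ) ^ (a + c)) ^ 2 := by
    rw [sq, ← Real.rpow_add hn0, ← Real.rpow_add hn0]
    congr 1; ring
  rw [Real.GammaSeq, Real.GammaSeq, Real.GammaSeq]
  rw [prod_div_distrib, prod_mul_distrib, prod_pow]
  rw [div_pow, mul_pow, ← key]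
  field_simp

lemma gammaRatio_tendsto_prod (a c : ℝ) (ha : 0 < a) (hc : 0 < c) :
    Tendsto (fun n : ℕ => ∏ j ∈ range (n+1), ((a+c+j)^2 / ((a+j)*(a+2*c+j)))) atTop
      (𝓝 (Real.Gamma (a+2*c) * Real.Gamma a / (Real.Gamma (a+c))^2)) := by
  have hGc : Real.Gamma (a+c) ≠ 0 := (Real.Gamma_pos_of_pos (by linarith)).ne'
  have h := ((Real.GammaSeq_tendsto_Gamma (a+2*c)).mul (Real.GammaSeq_tendsto_Gamma a)).div
    ((Real.GammaSeq_tendsto_Gamma (a+c)).pow 2) (pow_ne_zero 2 hGc)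
  refine h.congr' ?_
  filter_upwards [eventually_ge_atTop 1] with n hn
  exact gammaSeq_ratio a c ha hc hn

lemma gammaRatio_lower (a c : ℝ) (ha : 0 < a) (hc : 0 < c) :
    1 + c^2/(a+c) ≤ Real.Gamma (a+2*c) * Real.Gamma a / (Real.Gamma (a+c))^2 := by
  have hac : (0:ℝ) < a + c := by linarith
  have hnat : Tendsto (fun n : ℕ => ((n:ℝ))) atTop atTop := tendsto_natCast_atTop_atTop
  have h2 : Tendsto (fun n : ℕ => a + c + (n:ℝ) + 1) atTop atTop :=
    tendsto_atTop_add_const_right _ 1 (tendsto_atTop_add_const_left _ (a+c) hnat)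
  have hL : Tendsto (fun n : ℕ => 1 + c^2 * (1/(a+c) - 1/(a+c+(n:ℝ)+1))) atTop
      (𝓝 (1 + c^2/(a+c))) := by
    have h3 : Tendsto (fun n : ℕ => 1/(a+c+(n:ℝ)+1)) atTop (𝓝 0) := by
      simpa [one_div, Pi.inv_def] using h2.inv_tendsto_atTop
    have hconst : Tendsto (fun _ : ℕ => 1/(a+c)) atTop (𝓝 (1/(a+c))) := tendsto_const_nhds
    have := ((hconst.sub h3).const_mul (c^2)).const_add 1
    simpa [mul_one_div, div_eq_mul_inv] using this
  refine le_of_tendsto_of_tendsto' hL (gammaRatio_tendsto_prod a c ha hc) ?_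
  intro n
  have hfe : ∀ j ∈ range (n+1), (a+c+(j:ℝ))^2/((a+(j:ℝ))*(a+2*c+(j:ℝ)))
      = 1 + c^2/((a+(j:ℝ))*(a+2*c+(j:ℝ))) := by
    intro j _
    have hd : (0:ℝ) < (a+(j:ℝ))*(a+2*c+(j:ℝ)) := by positivity
    field_simp
    ring
  rw [prod_congr rfl hfe]
  have hstep : ∀ j : ℕ, c^2 * (1/((a+c+(j:ℝ))*(a+c+(j:ℝ)+1)))
      ≤ c^2/((a+(j:ℝ))*(a+2*c+(j:ℝ))) := by
    intro j
    rw [mul_one_div]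
    have h1 : (0:ℝ) < (a+(j:ℝ))*(a+2*c+(j:ℝ)) := by positivity
    have hj0 : (0:ℝ) ≤ a+c+(j:ℝ) := by positivity
    exact div_le_div_of_nonneg_left (sq_nonneg c) h1 (by nlinarith [sq_nonneg c])
  calc 1 + c^2 * (1/(a+c) - 1/(a+c+(n:ℝ)+1))
      = 1 + ∑ j ∈ range (n+1), c^2 * (1/((a+c+(j:ℝ))*(a+c+(j:ℝ)+1))) := by
        rw [← mul_sum, sum_inv_telescope hac (n+1)]
        push_cast
        ring_nf
    _ ≤ 1 + ∑ j ∈ range (n+1), c^2/((a+(j:ℝ))*(a+2*c+(j:ℝ))) := by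
        gcongr with j hj
        exact hstep j
    _ ≤ ∏ j ∈ range (n+1), (1 + c^2/((a+(j:ℝ))*(a+2*c+(j:ℝ)))) :=
        prod_one_add_ge (fun j => by positivity) (n+1)

lemma gammaRatio_upper (a c : ℝ) (ha : 0 < a) (hc : 0 < c) :
    Real.Gamma (a+2*c) * Real.Gamma a / (Real.Gamma (a+c))^2
      ≤ Real.exp (c^2/a^2 + c^2/a) := by
  refine le_of_tendsto (gammaRatio_tendsto_prod a c ha hc) (Eventually.of_forall fun n => ?_)
  have hfe : ∀ j ∈ range (n+1), (a+c+(j:ℝ))^2/((a+(j:ℝ))*(a+2*c+(j:ℝ)))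
      = 1 + c^2/((a+(j:ℝ))*(a+2*c+(j:ℝ))) := by
    intro j _
    have hd : (0:ℝ) < (a+(j:ℝ))*(a+2*c+(j:ℝ)) := by positivity
    field_simp
    ring
  rw [prod_congr rfl hfe]
  refine le_trans (prod_one_add_le (fun j => by positivity) (n+1)) (Real.exp_le_exp.2 ?_)
  have hsum : ∑ j ∈ range (n+1), c^2/((a+(j:ℝ))*(a+2*c+(j:ℝ)))
      ≤ c^2/a^2 + ∑ j ∈ range n, c^2 * (1/((a+(j:ℝ))*(a+(j:ℝ)+1))) := by
    rw [sum_range_succ']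
    push_cast
    have h0 : c^2/((a+(0:ℝ))*(a+2*c+(0:ℝ))) ≤ c^2/a^2 := by
      have h1 : (0:ℝ) < a^2 := by positivity
      exact div_le_div_of_nonneg_left (sq_nonneg c) (by positivity) (by nlinarith)
    have hterm : ∀ j ∈ range n, c^2/((a+((j:ℝ)+1))*(a+2*c+((j:ℝ)+1)))
        ≤ c^2 * (1/((a+(j:ℝ))*(a+(j:ℝ)+1))) := by
      intro j _
      rw [mul_one_div]
      have h1 : (0:ℝ) < (a+(j:ℝ))*(a+(j:ℝ)+1) := by positivity
      exact div_le_div_of_nonneg_left (sq_nonneg c) (by positivity) (by nlinarith)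
    calc (∑ j ∈ range n, c^2/((a+((j:ℝ)+1))*(a+2*c+((j:ℝ)+1)))) + c^2/((a+(0:ℝ))*(a+2*c+(0:ℝ)))
        ≤ (∑ j ∈ range n, c^2 * (1/((a+(j:ℝ))*(a+(j:ℝ)+1)))) + c^2/a^2 := by
          exact add_le_add (sum_le_sum hterm) h0
      _ = c^2/a^2 + ∑ j ∈ range n, c^2 * (1/((a+(j:ℝ))*(a+(j:ℝ)+1))) := by ring
  refine hsum.trans ?_
  rw [← mul_sum, sum_inv_telescope ha n]
  have hn1 : (0:ℝ) ≤ 1/(a+(n:ℝ)) := by positivity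
  have : c^2 * (1/a - 1/(a+(n:ℝ))) ≤ c^2 * (1/a) :=
    mul_le_mul_of_nonneg_left (by linarith) (sq_nonneg c)
  rw [mul_one_div] at this
  linarith

lemma tendsto_gammaRatio (c : ℝ) (hc : 0 < c) :
    Tendsto (fun a : ℝ => a * (Real.Gamma (a+2*c) * Real.Gamma a / (Real.Gamma (a+c))^2 - 1))
      atTop (𝓝 (c^2)) := by
  have hlo : Tendsto (fun a : ℝ => a * (c^2/(a+c))) atTop (𝓝 (c^2)) := by
    have h1 : Tendsto (fun a : ℝ => a + c) atTop atTop :=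
      tendsto_atTop_add_const_right _ c tendsto_id
    have h2 : Tendsto (fun a : ℝ => c/(a+c)) atTop (𝓝 0) := by
      have := h1.inv_tendsto_atTop.const_mul c
      simpa [div_eq_mul_inv] using this
    have h3 : Tendsto (fun a : ℝ => c^2 * (1 - c/(a+c))) atTop (𝓝 (c^2 * (1 - 0))) :=
      (tendsto_const_nhds.sub h2).const_mul _
    rw [sub_zero, mul_one] at h3
    refine h3.congr' ?_
    filter_upwards [eventually_gt_atTop 0] with a ha
    have hac : a + c ≠ 0 := by positivity
    field_simp
    ring
  have hhi : Tendsto (fun a : ℝ => (c^2/a + c^2) / (1 - (c^2/a^2 + c^2/a))) atTop (𝓝 (c^2)) := by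
    have h1 : Tendsto (fun a : ℝ => c^2/a) atTop (𝓝 0) := by
      have := (tendsto_id (x := (atTop : Filter ℝ))).inv_tendsto_atTop.const_mul (c^2)
      simpa [div_eq_mul_inv, Pi.inv_apply] using this
    have h2 : Tendsto (fun a : ℝ => c^2/a^2) atTop (𝓝 0) := by
      have hp : Tendsto (fun a : ℝ => a^2) atTop atTop := tendsto_pow_atTop two_ne_zero
      have := hp.inv_tendsto_atTop.const_mul (c^2)
      simpa [div_eq_mul_inv] using this
    have hnum : Tendsto (fun a : ℝ => c^2/a + c^2) atTop (𝓝 (0 + c^2)) :=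
      h1.add tendsto_const_nhds
    have hden : Tendsto (fun a : ℝ => 1 - (c^2/a^2 + c^2/a)) atTop (𝓝 (1 - (0+0))) :=
      tendsto_const_nhds.sub (h2.add h1)
    have h3 := hnum.div hden (by norm_num)
    simpa [Pi.div_def] using h3
  refine tendsto_of_tendsto_of_tendsto_of_le_of_le' hlo hhi ?_ ?_
  · filter_upwards [eventually_gt_atTop 0] with a ha
    have h := gammaRatio_lower a c ha hc
    have h2 : c^2/(a+c) ≤ Real.Gamma (a+2*c) * Real.Gamma a / (Real.Gamma (a+c))^2 - 1 := by
      linarith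
    exact mul_le_mul_of_nonneg_left h2 ha.le
  · filter_upwards [eventually_ge_atTop 1, eventually_ge_atTop (4*c^2+1)] with a ha1 ha4
    have ha : (0:ℝ) < a := by linarith
    have hcaa : c^2/a^2 ≤ c^2/a := div_le_div_of_nonneg_left (sq_nonneg c) ha (by nlinarith)
    have hca : c^2/a ≤ c^2/(4*c^2+1) :=
      div_le_div_of_nonneg_left (sq_nonneg c) (by positivity) ha4
    have h14 : c^2/(4*c^2+1) ≤ 1/4 := by
      rw [div_le_div_iff₀ (by positivity) (by norm_num)]
      nlinarith
    have htpos : (0:ℝ) ≤ c^2/a^2 + c^2/a := by positivity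
    have ht2 : c^2/a^2 + c^2/a ≤ 1/2 := by linarith
    have h1t : (0:ℝ) < 1 - (c^2/a^2 + c^2/a) := by linarith
    have hexp : Real.exp (c^2/a^2 + c^2/a) ≤ (1 - (c^2/a^2 + c^2/a))⁻¹ := by
      have h := Real.add_one_le_exp (-(c^2/a^2 + c^2/a))
      rw [Real.exp_neg] at h
      have h' : 1 - (c^2/a^2 + c^2/a) ≤ (Real.exp (c^2/a^2 + c^2/a))⁻¹ := by linarith
      have := inv_anti₀ h1t h'
      rwa [inv_inv] at this
    have hF := gammaRatio_upper a c ha hc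
    have hF2 : Real.Gamma (a+2*c) * Real.Gamma a / (Real.Gamma (a+c))^2 - 1
        ≤ (1 - (c^2/a^2 + c^2/a))⁻¹ - 1 := by linarith [hF.trans hexp]
    have h1t' : (1 - (c^2/a^2 + c^2/a)) ≠ 0 := h1t.ne'
    have hat : a * (c^2/a^2 + c^2/a) = c^2/a + c^2 := by
      field_simp
    have hself : a = a*(1 - (c^2/a^2 + c^2/a))*(1 - (c^2/a^2 + c^2/a))⁻¹ := by
      rw [mul_assoc, mul_inv_cancel₀ h1t', mul_one]
    have key : a * ((1 - (c^2/a^2 + c^2/a))⁻¹ - 1) = (c^2/a + c^2) / (1 - (c^2/a^2 + c^2/a)) := by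
      calc a*((1 - (c^2/a^2 + c^2/a))⁻¹-1) = a*(1 - (c^2/a^2 + c^2/a))⁻¹ - a := by ring
        _ = a*(1 - (c^2/a^2 + c^2/a))⁻¹ - a*(1 - (c^2/a^2 + c^2/a))*(1 - (c^2/a^2 + c^2/a))⁻¹ := by rw [← hself]
        _ = (a*(c^2/a^2 + c^2/a))*(1 - (c^2/a^2 + c^2/a))⁻¹ := by ring
        _ = (c^2/a+c^2) * (1 - (c^2/a^2 + c^2/a))⁻¹ := by rw [hat]
        _ = (c^2/a+c^2)/(1 - (c^2/a^2 + c^2/a)) := (div_eq_mul_inv _ _).symm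
    calc a * (Real.Gamma (a+2*c) * Real.Gamma a / (Real.Gamma (a+c))^2 - 1)
        ≤ a * ((1 - (c^2/a^2 + c^2/a))⁻¹ - 1) := mul_le_mul_of_nonneg_left hF2 ha.le
      _ = (c^2/a + c^2) / (1 - (c^2/a^2 + c^2/a)) := key

/-- **Kotz-type radius.** Let `ξ ≥ 0` with `ξ^{2s} ~ Gamma(α, β)` (shape `α`, rate `β`). Then
`Eξ⁴/(Eξ²)² = Γ(α+2/s)Γ(α)/Γ(α+1/s)²`; as `α → ∞` this is `1 + 1/(s²α) + o(α⁻¹)`, and with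
`α = (k-1+p/2)/s` the condition `Eξ⁴/(Eξ²)² = 1 + τ/p + o(p⁻¹)` holds with `τ = 2/s`. -/
theorem stmt16
    (s α β : ℝ) (hs : 0 < s) (hα : 0 < α) (hβ : 0 < β)
    (Ω : Type) [MeasurableSpace Ω] (P : Measure Ω) [IsProbabilityMeasure P]
    (ξ : Ω → ℝ)
    (hmξ : Measurable ξ)
    (hξ0 : ∀ᵐ ω ∂P, 0 ≤ ξ ω)
    (hlaw : P.map (fun ω => ξ ω ^ (2 * s)) = gammaMeasure α β) :
    ((∫ ω, (ξ ω) ^ 4 ∂P) / (∫ ω, (ξ ω) ^ 2 ∂P) ^ 2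
        = Real.Gamma (α + 2 / s) * Real.Gamma α / (Real.Gamma (α + 1 / s)) ^ 2) ∧
    Tendsto (fun a : ℝ =>
        a * (Real.Gamma (a + 2 / s) * Real.Gamma a / (Real.Gamma (a + 1 / s)) ^ 2 - 1))
      atTop (𝓝 (1 / s ^ 2)) ∧
    ∀ k : ℝ, Tendsto (fun p : ℕ =>
        (p : ℝ) * (Real.Gamma ((k - 1 + (p : ℝ) / 2) / s + 2 / s) *
            Real.Gamma ((k - 1 + (p : ℝ) / 2) / s) /
            (Real.Gamma ((k - 1 + (p : ℝ) / 2) / s + 1 / s)) ^ 2 - 1))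
      atTop (𝓝 (2 / s)) := by
  have hg : Measurable fun ω => ξ ω ^ (2 * s) := hmξ.pow_const _
  -- fourth moment
  have hm4 : ∫ ω, (ξ ω) ^ 4 ∂P
      = Real.Gamma (α + 2/s) / (β ^ ((2:ℝ)/s) * Real.Gamma α) := by
    have hf : Measurable fun x : ℝ => x ^ ((2:ℝ)/s) := measurable_id.pow_const _
    have h1 : ∫ x, x ^ ((2:ℝ)/s) ∂(P.map (fun ω => ξ ω ^ (2 * s)))
        = ∫ ω, (ξ ω ^ (2 * s)) ^ ((2:ℝ)/s) ∂P :=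
      integral_map hg.aemeasurable hf.aestronglyMeasurable
    rw [hlaw, gamma_rpow_integral hα hβ (show 0 < α + 2/s by positivity)] at h1
    rw [h1]
    refine integral_congr_ae ?_
    filter_upwards [hξ0] with ω hω
    rw [← Real.rpow_mul hω, show (2*s) * ((2:ℝ)/s) = ((4:ℕ):ℝ) by field_simp; ring,
      Real.rpow_natCast]
  -- second moment
  have hm2 : ∫ ω, (ξ ω) ^ 2 ∂P
      = Real.Gamma (α + 1/s) / (β ^ ((1:ℝ)/s) * Real.Gamma α) := by
    have hf : Measurable fun x : ℝ => x ^ ((1:ℝ)/s) := measurable_id.pow_const _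
    have h1 : ∫ x, x ^ ((1:ℝ)/s) ∂(P.map (fun ω => ξ ω ^ (2 * s)))
        = ∫ ω, (ξ ω ^ (2 * s)) ^ ((1:ℝ)/s) ∂P :=
      integral_map hg.aemeasurable hf.aestronglyMeasurable
    rw [hlaw, gamma_rpow_integral hα hβ (show 0 < α + 1/s by positivity)] at h1
    rw [h1]
    refine integral_congr_ae ?_
    filter_upwards [hξ0] with ω hω
    rw [← Real.rpow_mul hω, show (2*s) * ((1:ℝ)/s) = ((2:ℕ):ℝ) by field_simp; norm_num,
      Real.rpow_natCast]
  have hGα : (0:ℝ) < Real.Gamma α := Real.Gamma_pos_of_pos hα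
  have hG1 : (0:ℝ) < Real.Gamma (α + 1/s) := Real.Gamma_pos_of_pos (by positivity)
  have hb1 : (0:ℝ) < β ^ ((1:ℝ)/s) := Real.rpow_pos_of_pos hβ _
  have hb2 : β ^ ((2:ℝ)/s) = (β ^ ((1:ℝ)/s)) ^ 2 := by
    rw [← Real.rpow_natCast (β ^ ((1:ℝ)/s)) 2, ← Real.rpow_mul hβ.le]
    congr 1
    push_cast
    ring
  refine ⟨?_, ?_, ?_⟩
  · rw [hm4, hm2, hb2, div_pow, div_div_div_eq]
    rw [div_eq_div_iff (by positivity) (by positivity)]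
    ring
  · have h := tendsto_gammaRatio (1/s) (by positivity)
    have hfun : (fun a : ℝ => a * (Real.Gamma (a + 2*(1/s)) * Real.Gamma a
        / (Real.Gamma (a + 1/s)) ^ 2 - 1))
        = (fun a : ℝ => a * (Real.Gamma (a + 2/s) * Real.Gamma a
        / (Real.Gamma (a + 1/s)) ^ 2 - 1)) := by
      funext a
      rw [show a + 2*(1/s) = a + 2/s by ring]
    rw [← show ((1:ℝ)/s)^2 = 1/s^2 by rw [div_pow, one_pow], ← hfun]
    exact h
  · intro k
    have h2 : Tendsto (fun a : ℝ => a * (Real.Gamma (a + 2/s) * Real.Gamma a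
        / (Real.Gamma (a + 1/s)) ^ 2 - 1)) atTop (𝓝 (1/s^2)) := by
      have h := tendsto_gammaRatio (1/s) (by positivity)
      have hfun : (fun a : ℝ => a * (Real.Gamma (a + 2*(1/s)) * Real.Gamma a
          / (Real.Gamma (a + 1/s)) ^ 2 - 1))
          = (fun a : ℝ => a * (Real.Gamma (a + 2/s) * Real.Gamma a
          / (Real.Gamma (a + 1/s)) ^ 2 - 1)) := by
        funext a
        rw [show a + 2*(1/s) = a + 2/s by ring]
      rw [← show ((1:ℝ)/s)^2 = 1/s^2 by rw [div_pow, one_pow], ← hfun]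
      exact h
    have hαtop : Tendsto (fun p : ℕ => ((k - 1 + (p:ℝ)/2)/s)) atTop atTop := by
      refine Tendsto.atTop_div_const hs ?_
      refine tendsto_atTop_add_const_left _ _ ?_
      exact Tendsto.atTop_div_const two_pos tendsto_natCast_atTop_atTop
    have hcomp : Tendsto (fun p : ℕ => ((k - 1 + (p:ℝ)/2)/s) * (Real.Gamma (((k - 1 + (p:ℝ)/2)/s) + 2/s) * Real.Gamma ((k - 1 + (p:ℝ)/2)/s) / (Real.Gamma (((k - 1 + (p:ℝ)/2)/s) + 1/s)) ^ 2 - 1)) atTop (𝓝 (1/s^2)) := h2.comp hαtop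
    have hpos : ∀ᶠ p : ℕ in atTop, (0:ℝ) < ((k - 1 + (p:ℝ)/2)/s) := hαtop.eventually (eventually_gt_atTop 0)
    have hG0 : Tendsto (fun p : ℕ => (Real.Gamma (((k - 1 + (p:ℝ)/2)/s) + 2/s) * Real.Gamma ((k - 1 + (p:ℝ)/2)/s) / (Real.Gamma (((k - 1 + (p:ℝ)/2)/s) + 1/s)) ^ 2 - 1)) atTop (𝓝 0) := by
      have hinv : Tendsto (fun p : ℕ => (((k - 1 + (p:ℝ)/2)/s))⁻¹) atTop (𝓝 0) := hαtop.inv_tendsto_atTop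
      have hmul := hcomp.mul hinv
      rw [mul_zero] at hmul
      refine hmul.congr' ?_
      filter_upwards [hpos] with p hp
      rw [mul_comm ((k - 1 + (p:ℝ)/2)/s) (Real.Gamma (((k - 1 + (p:ℝ)/2)/s) + 2/s) * Real.Gamma ((k - 1 + (p:ℝ)/2)/s) / (Real.Gamma (((k - 1 + (p:ℝ)/2)/s) + 1/s)) ^ 2 - 1), mul_assoc, mul_inv_cancel₀ hp.ne', mul_one]
    have hA := hcomp.const_mul (2*s)
    have hB := hG0.const_mul (2*(k-1))
    have hsub := hA.sub hB
    rw [mul_zero, sub_zero, show (2*s)*(1/s^2) = 2/s by field_simp] at hsub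
    refine hsub.congr fun p => ?_
    have hp : (2*s) * ((k - 1 + (p:ℝ)/2)/s) - 2*(k-1) = (p:ℝ) := by
      field_simp
      ring
    linear_combination (Real.Gamma (((k - 1 + (p:ℝ)/2)/s) + 2/s) * Real.Gamma ((k - 1 + (p:ℝ)/2)/s) / (Real.Gamma (((k - 1 + (p:ℝ)/2)/s) + 1/s)) ^ 2 - 1) * hp

end
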